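/- arXiv:0709.1788 — 2 statements merged into one kernel-verified Lean document; each statement's English description precedes it below -/
import Mathlib

section
/- The kernel G_q satisfies G_q(x,t) = ∑_{j=0}^∞ (-xt)^j q^{j(j-1)/2}/(t;q)_{j+1} for |t| < 1 and all x ∈ ℂ. -/
noncomputable def qPoch (q x : ℂ) (k : ℕ) : ℂ := ∏ j ∈ Finset.range k, (1 - x * q ^ j)

noncomputable def Gq (q : ℝ) (x t : ℂ) : ℂ := ∑' k : ℕ, t ^ k * qPoch q x k

/-!
Write `a j` for the `j`-th term of the right-hand side. The series `G(s) = ∑ sᵏ (x;q)ₖ` satisfies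
the functional equation `(1 - s) G(s) = 1 - x s G(q s)`, while `a (j + 1) (1 - q^(j+1) t)` equals
`-x t q^j a j`. Together these make `r n = a n (1 - qⁿ t) G(qⁿ t)` satisfy `r n = a n + r (n + 1)`,
with `r 0 = G(t)`, so `G(t) - ∑_{j<n} a j = r n`. Since `‖(x;q)ₖ‖ ≤ exp (‖x‖ / (1 - |q|))`, `G` is
bounded on the disc of radius `‖t‖`, and `r n → 0` because `a n → 0`.
-/

open Filter Topology

theorem tsum_eq_of_eq_add_succ {E : Type*} [AddCommGroup E] [TopologicalSpace E]
    [IsTopologicalAddGroup E] [T2Space E] {a r : ℕ → E} (ha : Summable a)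
    (hr : ∀ n, r n = a n + r (n + 1)) (hr_lim : Tendsto r atTop (𝓝 0)) :
    ∑' n, a n = r 0 := by
  have partial_sum : ∀ n, ∑ j ∈ Finset.range n, a j = r 0 - r n := fun n => by
    rw [← Finset.sum_range_sub']
    exact Finset.sum_congr rfl fun j _ => eq_sub_of_add_eq (hr j).symm
  refine tendsto_nhds_unique ha.hasSum.tendsto_sum_nat ?_
  simpa [partial_sum] using tendsto_const_nhds.sub hr_lim

theorem summable_of_succ_eq_mul_of_tendsto_zero {α : Type*} [NormedRing α] [CompleteSpace α]
    {f g : ℕ → α} (hfg : ∀ n, f (n + 1) = f n * g n) (hg : Tendsto g atTop (𝓝 0)) :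
    Summable f := by
  refine summable_of_ratio_norm_eventually_le (r := 1 / 2) (by norm_num) ?_
  filter_upwards [(tendsto_zero_iff_norm_tendsto_zero.1 hg).eventually_le_const
    (by norm_num : (0 : ℝ) < 1 / 2)] with n hn
  calc ‖f (n + 1)‖ ≤ ‖f n‖ * ‖g n‖ := hfg n ▸ norm_mul_le _ _
    _ ≤ 1 / 2 * ‖f n‖ := by rw [mul_comm]; gcongr

@[simp]
theorem qPoch_zero (q x : ℂ) : qPoch q x 0 = 1 := by simp [qPoch]

theorem qPoch_succ (q x : ℂ) (k : ℕ) : qPoch q x (k + 1) = qPoch q x k * (1 - x * q ^ k) :=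
  Finset.prod_range_succ _ _

theorem norm_qPoch_le_exp {q : ℂ} (hq : ‖q‖ < 1) (x : ℂ) (k : ℕ) :
    ‖qPoch q x k‖ ≤ Real.exp (‖x‖ / (1 - ‖q‖)) := by
  have geom_le : ∑ j ∈ Finset.range k, ‖q‖ ^ j ≤ (1 - ‖q‖)⁻¹ := by
    rw [← tsum_geometric_of_lt_one (norm_nonneg q) hq]
    exact (summable_geometric_of_lt_one (norm_nonneg q) hq).sum_le_tsum _
      fun j _ => by positivity
  calc ‖qPoch q x k‖ = ∏ j ∈ Finset.range k, ‖1 - x * q ^ j‖ := by rw [qPoch, norm_prod]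
    _ ≤ ∏ j ∈ Finset.range k, Real.exp (‖x‖ * ‖q‖ ^ j) := by
        gcongr with j
        calc ‖1 - x * q ^ j‖ ≤ ‖(1 : ℂ)‖ + ‖x * q ^ j‖ := norm_sub_le _ _
          _ = ‖x‖ * ‖q‖ ^ j + 1 := by rw [norm_one, norm_mul, norm_pow, add_comm]
          _ ≤ Real.exp (‖x‖ * ‖q‖ ^ j) := Real.add_one_le_exp _
    _ = Real.exp (‖x‖ * ∑ j ∈ Finset.range k, ‖q‖ ^ j) := by rw [Finset.mul_sum, Real.exp_sum]
    _ ≤ Real.exp (‖x‖ / (1 - ‖q‖)) := by rw [div_eq_mul_inv]; gcongr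

noncomputable def GqAltTerm (q x t : ℂ) (j : ℕ) : ℂ :=
  (-x * t) ^ j * q ^ (j * (j - 1) / 2) / qPoch q t (j + 1)

theorem GqAltTerm_succ (q x t : ℂ) (j : ℕ) :
    GqAltTerm q x t (j + 1) = GqAltTerm q x t j * (-x * t * q ^ j / (1 - t * q ^ (j + 1))) := by
  rw [GqAltTerm, GqAltTerm, qPoch_succ q t (j + 1), Nat.triangle_succ, mul_div_mul_comm]
  ring

theorem summable_GqAltTerm {q : ℂ} (hq : ‖q‖ < 1) (x t : ℂ) : Summable (GqAltTerm q x t) := by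
  refine summable_of_succ_eq_mul_of_tendsto_zero (GqAltTerm_succ q x t) ?_
  have hpow : Tendsto (fun j : ℕ => q ^ j) atTop (𝓝 0) :=
    tendsto_pow_atTop_nhds_zero_of_norm_lt_one hq
  have hpow_succ : Tendsto (fun j : ℕ => q ^ (j + 1)) atTop (𝓝 0) :=
    hpow.comp (tendsto_add_atTop_nat 1)
  have hlim := ((tendsto_const_nhds (x := -x * t)).mul hpow).div
    ((tendsto_const_nhds (x := 1)).sub ((tendsto_const_nhds (x := t)).mul hpow_succ)) (by simp)
  rwa [mul_zero, mul_zero, sub_zero, zero_div] at hlim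

section Gq

variable {q : ℝ} (x : ℂ)

theorem norm_ofReal_pow_mul_le (hq : |q| < 1) (n : ℕ) (s : ℂ) : ‖(q : ℂ) ^ n * s‖ ≤ ‖s‖ := by
  rw [norm_mul, norm_pow, Complex.norm_real, Real.norm_eq_abs]
  exact mul_le_of_le_one_left (norm_nonneg s) (pow_le_one₀ (abs_nonneg q) hq.le)

theorem norm_pow_mul_qPoch_le (hq : |q| < 1) (s : ℂ) (k : ℕ) :
    ‖s ^ k * qPoch q x k‖ ≤ Real.exp (‖x‖ / (1 - |q|)) * ‖s‖ ^ k := by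
  have hq' : ‖(q : ℂ)‖ < 1 := by rwa [Complex.norm_real, Real.norm_eq_abs]
  rw [norm_mul, norm_pow, mul_comm]
  gcongr
  simpa [Complex.norm_real, Real.norm_eq_abs] using norm_qPoch_le_exp hq' x k

theorem summable_norm_pow_mul_qPoch (hq : |q| < 1) {s : ℂ} (hs : ‖s‖ < 1) :
    Summable fun k : ℕ => ‖s ^ k * qPoch q x k‖ :=
  .of_nonneg_of_le (fun _ => norm_nonneg _) (norm_pow_mul_qPoch_le x hq s)
    ((summable_geometric_of_lt_one (norm_nonneg s) hs).mul_left _)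

theorem norm_Gq_le (hq : |q| < 1) {s : ℂ} (hs : ‖s‖ < 1) :
    ‖Gq q x s‖ ≤ Real.exp (‖x‖ / (1 - |q|)) / (1 - ‖s‖) := by
  calc ‖Gq q x s‖ ≤ ∑' k : ℕ, ‖s ^ k * qPoch q x k‖ :=
        norm_tsum_le_tsum_norm (summable_norm_pow_mul_qPoch x hq hs)
    _ ≤ ∑' k : ℕ, Real.exp (‖x‖ / (1 - |q|)) * ‖s‖ ^ k :=
        (summable_norm_pow_mul_qPoch x hq hs).tsum_le_tsum (norm_pow_mul_qPoch_le x hq s)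
          ((summable_geometric_of_lt_one (norm_nonneg s) hs).mul_left _)
    _ = Real.exp (‖x‖ / (1 - |q|)) / (1 - ‖s‖) := by
        rw [tsum_mul_left, tsum_geometric_of_lt_one (norm_nonneg s) hs, ← div_eq_mul_inv]

theorem one_sub_mul_Gq (hq : |q| < 1) {s : ℂ} (hs : ‖s‖ < 1) :
    (1 - s) * Gq q x s = 1 - x * s * Gq q x (q * s) := by
  have hG : Summable fun k : ℕ => s ^ k * qPoch q x k :=
    (summable_norm_pow_mul_qPoch x hq hs).of_norm
  have shifted_term : ∀ k : ℕ, s ^ (k + 1) * qPoch q x (k + 1) - s * (s ^ k * qPoch q x k)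
      = -(x * s) * ((q * s) ^ k * qPoch q x k) := fun k => by
    rw [qPoch_succ]; ring
  calc (1 - s) * Gq q x s
      = 1 + ∑' k : ℕ, (s ^ (k + 1) * qPoch q x (k + 1) - s * (s ^ k * qPoch q x k)) := by
        rw [Gq, Summable.tsum_sub ((summable_nat_add_iff 1).2 hG) (hG.mul_left s),
          tsum_mul_left, hG.tsum_eq_zero_add]
        simp only [pow_zero, qPoch_zero, mul_one]
        ring
    _ = 1 - x * s * Gq q x (q * s) := by
        rw [tsum_congr shifted_term, tsum_mul_left, Gq]
        ring

noncomputable def GqRemainder (q : ℝ) (x t : ℂ) (n : ℕ) : ℂ :=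
  GqAltTerm q x t n * ((1 - q ^ n * t) * Gq q x (q ^ n * t))

theorem GqRemainder_zero {t : ℂ} (ht : ‖t‖ < 1) : GqRemainder q x t 0 = Gq q x t := by
  have ht1 : 1 - t ≠ 0 := sub_ne_zero.2 fun h => by simp [← h] at ht
  simp only [GqRemainder, GqAltTerm, qPoch_succ, qPoch_zero]
  field_simp
  ring

theorem GqRemainder_eq_add_succ (hq : |q| < 1) {t : ℂ} (ht : ‖t‖ < 1) (n : ℕ) :
    GqRemainder q x t n = GqAltTerm q x t n + GqRemainder q x t (n + 1) := by
  have hs : ‖(q : ℂ) ^ n * t‖ < 1 := (norm_ofReal_pow_mul_le hq n t).trans_lt ht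
  have hden : 1 - t * (q : ℂ) ^ (n + 1) ≠ 0 := by
    refine sub_ne_zero.2 fun h => ?_
    have := (norm_ofReal_pow_mul_le hq (n + 1) t).trans_lt ht
    rw [mul_comm, ← h, norm_one] at this
    exact lt_irrefl _ this
  have hqs : (q : ℂ) * (q ^ n * t) = q ^ (n + 1) * t := by ring
  rw [GqRemainder, GqRemainder, one_sub_mul_Gq x hq hs, hqs, GqAltTerm_succ]
  field_simp
  ring

theorem tendsto_GqRemainder (hq : |q| < 1) {t : ℂ} (ht : ‖t‖ < 1) :
    Tendsto (GqRemainder q x t) atTop (𝓝 0) := by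
  have hq' : ‖(q : ℂ)‖ < 1 := by rwa [Complex.norm_real, Real.norm_eq_abs]
  refine (summable_GqAltTerm hq' x t).tendsto_atTop_zero.zero_mul_isBoundedUnder_le
    (isBoundedUnder_of ⟨2 * (Real.exp (‖x‖ / (1 - |q|)) / (1 - ‖t‖)), fun n => ?_⟩)
  have hs := norm_ofReal_pow_mul_le hq n t
  calc ‖(1 - (q : ℂ) ^ n * t) * Gq q x (q ^ n * t)‖
      = ‖1 - (q : ℂ) ^ n * t‖ * ‖Gq q x (q ^ n * t)‖ := norm_mul _ _
    _ ≤ 2 * (Real.exp (‖x‖ / (1 - |q|)) / (1 - ‖(q : ℂ) ^ n * t‖)) := by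
        gcongr
        · calc ‖1 - (q : ℂ) ^ n * t‖ ≤ ‖(1 : ℂ)‖ + ‖(q : ℂ) ^ n * t‖ := norm_sub_le _ _
            _ ≤ 2 := by rw [norm_one]; linarith
        · exact norm_Gq_le x hq (hs.trans_lt ht)
    _ ≤ 2 * (Real.exp (‖x‖ / (1 - |q|)) / (1 - ‖t‖)) := by gcongr

end Gq

theorem Gq_alternative_expansion (q : ℝ) (hq0 : 0 < q) (hq1 : q < 1)
    (x t : ℂ) (ht : ‖t‖ < 1) :
    Gq q x t = ∑' j : ℕ, (-x * t) ^ j * (q : ℂ) ^ (j * (j - 1) / 2) / qPoch q t (j + 1) := by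
  have hq : |q| < 1 := abs_lt.2 ⟨by linarith, hq1⟩
  have hq' : ‖(q : ℂ)‖ < 1 := by rwa [Complex.norm_real, Real.norm_eq_abs]
  calc Gq q x t = GqRemainder q x t 0 := (GqRemainder_zero x ht).symm
    _ = ∑' j : ℕ, GqAltTerm q x t j :=
        (tsum_eq_of_eq_add_succ (summable_GqAltTerm hq' x t) (GqRemainder_eq_add_succ x hq ht)
          (tendsto_GqRemainder x hq ht)).symm
end

section
/- For 0 < q < 1: ∑_{k=1}^∞ q^k/(1-q^k) = ∑_{k=1}^∞ (-1)^{k-1} q^{k(k+1)/2}/((1-q^k)(q;q)_k), i.e., the q-harmonic series ζ_q(1) has this alternating series representation. -/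
/-!
Van Hamme's finite identity
  `∑_{k=1}^n q^k/(1-q^k) = ∑_{k=1}^n (-1)^(k-1) q^(k(k+1)/2) [n, k]_q / (1-q^k)`
follows by induction on `n` from the q-Pascal rule: the increment of the right-hand side is
`q^(n+1) ∑_j (-1)^j q^(j(j+1)/2) [n, j]_q / (1-q^(j+1))`, which equals `q^(n+1)/(1-q^(n+1))` as the
case `m = 0` of `∑_j (-1)^j q^(j(j+1)/2) [n, j]_q / (1-q^(j+m+1)) = (q;q)_m (q;q)_n / (q;q)_(n+m+1)`.
As `n → ∞`, `[n, k]_q → 1/(q;q)_k`, and Tannery's theorem applies: since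
`log (1-x) ≥ -x/(1-x)`, every `(q;q)_k` is at least `exp (-ζ_q(1))`, so the `k`-th term is
dominated by `exp (ζ_q(1)) q^k/(1-q^k)`.
-/

open Filter Finset Topology

theorem Nat.triangle_add_succ (j : ℕ) : (j + 1) * (j + 1 + 1) / 2 = j * (j + 1) / 2 + (j + 1) := by
  rw [show (j + 1) * (j + 1 + 1) = j * (j + 1) + 2 * (j + 1) by ring,
    Nat.add_mul_div_left _ _ two_pos]

section Semiring

variable {R : Type*} [Semiring R] (q : R)

def qBinomial : ℕ → ℕ → R
  | _, 0 => 1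
  | 0, _ + 1 => 0
  | n + 1, j + 1 => qBinomial n (j + 1) + q ^ (n - j) * qBinomial n j

@[simp]
theorem qBinomial_zero_right (n : ℕ) : qBinomial q n 0 = 1 := by
  cases n <;> rfl

theorem qBinomial_succ_succ (n j : ℕ) :
    qBinomial q (n + 1) (j + 1) = qBinomial q n (j + 1) + q ^ (n - j) * qBinomial q n j :=
  rfl

theorem qBinomial_eq_zero_of_lt {n j : ℕ} (h : n < j) : qBinomial q n j = 0 := by
  induction n generalizing j with
  | zero => obtain ⟨j, rfl⟩ := Nat.exists_eq_succ_of_ne_zero h.ne'; rfl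
  | succ n ih =>
    obtain ⟨j, rfl⟩ := Nat.exists_eq_succ_of_ne_zero (Nat.ne_zero_of_lt h)
    rw [qBinomial_succ_succ, ih (by omega), ih (by omega), mul_zero, add_zero]

end Semiring

section CommRing

variable {R : Type*} [CommRing R] (q : R)

def qPochhammer (k : ℕ) : R := ∏ i ∈ range k, (1 - q ^ (i + 1))

@[simp]
theorem qPochhammer_zero : qPochhammer q 0 = 1 :=
  prod_range_zero _

theorem qPochhammer_succ (k : ℕ) : qPochhammer q (k + 1) = qPochhammer q k * (1 - q ^ (k + 1)) :=
  prod_range_succ _ _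

theorem qBinomial_mul_qPochhammer (n j : ℕ) :
    qBinomial q n j * qPochhammer q j = ∏ i ∈ range j, (1 - q ^ (n - i)) := by
  induction n generalizing j with
  | zero =>
    cases j with
    | zero => simp
    | succ j =>
      rw [qBinomial_eq_zero_of_lt q (Nat.succ_pos j), zero_mul]
      exact (prod_eq_zero (mem_range.2 (Nat.succ_pos j)) (by simp)).symm
  | succ n ih =>
    cases j with
    | zero => simp
    | succ j =>
      have hsplit : ∏ i ∈ range (j + 1), (1 - q ^ (n + 1 - i)) =
          (1 - q ^ (n + 1)) * ∏ i ∈ range j, (1 - q ^ (n - i)) := by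
        rw [prod_range_succ', Nat.sub_zero, mul_comm]
        simp only [Nat.succ_sub_succ]
      have hj1 := ih (j + 1)
      have hj := ih j
      rw [qPochhammer_succ, prod_range_succ] at hj1
      rw [qBinomial_succ_succ, qPochhammer_succ, hsplit]
      rcases le_or_gt j n with hjn | hnj
      · have hpow : q ^ (n - j) * q ^ (j + 1) = q ^ (n + 1) := by
          rw [← pow_add]; congr 1; omega
        linear_combination hj1 + q ^ (n - j) * (1 - q ^ (j + 1)) * hj
          - (∏ i ∈ range j, (1 - q ^ (n - i))) * hpow
      · have hzero : ∏ i ∈ range j, (1 - q ^ (n - i)) = 0 :=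
          prod_eq_zero (mem_range.2 hnj) (by simp)
        rw [hzero] at hj1 hj ⊢
        linear_combination hj1 + q ^ (n - j) * (1 - q ^ (j + 1)) * hj

/-- The coefficient of `x ^ j` in `∏ i ∈ range n, (1 - q ^ (i + 1) * x)`, by the q-binomial
theorem. -/
def eulerCoeff (n j : ℕ) : R := (-1) ^ j * q ^ (j * (j + 1) / 2) * qBinomial q n j

@[simp]
theorem eulerCoeff_zero_right (n : ℕ) : eulerCoeff q n 0 = 1 := by
  simp [eulerCoeff]

theorem eulerCoeff_eq_zero_of_lt {n j : ℕ} (h : n < j) : eulerCoeff q n j = 0 := by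
  rw [eulerCoeff, qBinomial_eq_zero_of_lt q h, mul_zero]

theorem eulerCoeff_succ_succ {n j : ℕ} (h : j ≤ n) :
    eulerCoeff q (n + 1) (j + 1) = eulerCoeff q n (j + 1) - q ^ (n + 1) * eulerCoeff q n j := by
  have hpow : q ^ ((j + 1) * (j + 1 + 1) / 2) * q ^ (n - j) =
      q ^ (j * (j + 1) / 2) * q ^ (n + 1) := by
    rw [← pow_add, ← pow_add, Nat.triangle_add_succ]; congr 1; omega
  simp only [eulerCoeff, qBinomial_succ_succ]
  linear_combination (-1) ^ (j + 1) * qBinomial q n j * hpow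

theorem sum_eulerCoeff_succ_mul (n : ℕ) (g : ℕ → R) :
    ∑ k ∈ range (n + 1), eulerCoeff q (n + 1) (k + 1) * g k =
      ∑ k ∈ range n, eulerCoeff q n (k + 1) * g k
        - q ^ (n + 1) * ∑ k ∈ range (n + 1), eulerCoeff q n k * g k := by
  calc ∑ k ∈ range (n + 1), eulerCoeff q (n + 1) (k + 1) * g k
      = ∑ k ∈ range (n + 1),
          (eulerCoeff q n (k + 1) * g k - q ^ (n + 1) * (eulerCoeff q n k * g k)) :=
        sum_congr rfl fun k hk => by
          rw [eulerCoeff_succ_succ q (mem_range_succ_iff.1 hk)]; ring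
    _ = _ := by
      rw [sum_sub_distrib, ← mul_sum, sum_range_succ _ n,
        eulerCoeff_eq_zero_of_lt q n.lt_succ_self, zero_mul, add_zero]

end CommRing

section Field

variable {K : Type*} [Field K] {q : K}

theorem one_sub_pow_succ_ne_zero (hq : ∀ i, q ^ (i + 1) ≠ 1) (k : ℕ) : 1 - q ^ (k + 1) ≠ 0 :=
  sub_ne_zero.2 (hq k).symm

theorem qPochhammer_ne_zero (hq : ∀ i, q ^ (i + 1) ≠ 1) (k : ℕ) : qPochhammer q k ≠ 0 :=
  prod_ne_zero_iff.2 fun i _ => one_sub_pow_succ_ne_zero hq i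

-- The parameter `m` is what makes the induction on `n` go through.
theorem sum_eulerCoeff_div_one_sub_pow (hq : ∀ i, q ^ (i + 1) ≠ 1) (n m : ℕ) :
    ∑ j ∈ range (n + 1), eulerCoeff q n j / (1 - q ^ (j + m + 1)) =
      qPochhammer q m * qPochhammer q n / qPochhammer q (n + m + 1) := by
  induction n generalizing m with
  | zero =>
    rw [sum_range_one, eulerCoeff_zero_right, zero_add, qPochhammer_succ, qPochhammer_zero]
    field_simp [one_sub_pow_succ_ne_zero hq m, qPochhammer_ne_zero hq m]
  | succ n ih =>
    have hrec : ∑ j ∈ range (n + 2), eulerCoeff q (n + 1) j / (1 - q ^ (j + m + 1)) =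
        ∑ j ∈ range (n + 1), eulerCoeff q n j / (1 - q ^ (j + m + 1))
          - q ^ (n + 1) * ∑ j ∈ range (n + 1), eulerCoeff q n j / (1 - q ^ (j + (m + 1) + 1)) := by
      simp only [div_eq_mul_inv]
      rw [sum_range_succ', sum_eulerCoeff_succ_mul,
        sum_range_succ' (fun j => eulerCoeff q n j * (1 - q ^ (j + m + 1))⁻¹)]
      have hexp : ∀ k, k + (m + 1) + 1 = k + 1 + m + 1 := fun k => by omega
      simp only [eulerCoeff_zero_right, hexp]
      ring
    rw [hrec, ih, ih, show n + (m + 1) + 1 = n + m + 1 + 1 by ring,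
      show n + 1 + m + 1 = n + m + 1 + 1 by ring,
      qPochhammer_succ q (n + m + 1), qPochhammer_succ q m, qPochhammer_succ q n]
    field_simp [one_sub_pow_succ_ne_zero hq (n + m + 1), qPochhammer_ne_zero hq (n + m + 1)]
    ring

theorem sum_range_pow_div_one_sub_pow (hq : ∀ i, q ^ (i + 1) ≠ 1) (n : ℕ) :
    ∑ k ∈ range n, q ^ (k + 1) / (1 - q ^ (k + 1)) =
      -∑ k ∈ range n, eulerCoeff q n (k + 1) / (1 - q ^ (k + 1)) := by
  induction n with
  | zero => simp
  | succ n ih =>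
    have hincr : ∑ k ∈ range (n + 1), eulerCoeff q n k * (1 - q ^ (k + 1))⁻¹ =
        (1 - q ^ (n + 1))⁻¹ := by
      have h := sum_eulerCoeff_div_one_sub_pow hq n 0
      rw [qPochhammer_zero, one_mul, qPochhammer_succ,
        div_mul_cancel_left₀ (qPochhammer_ne_zero hq n)] at h
      simpa only [div_eq_mul_inv, add_zero] using h
    simp only [div_eq_mul_inv] at ih ⊢
    rw [sum_range_succ, ih, sum_eulerCoeff_succ_mul, hincr]
    ring

end Field

section NormedField

variable {K : Type*} [NormedField K] {q : K}

theorem pow_succ_ne_one_of_norm_lt_one (hq : ‖q‖ < 1) (i : ℕ) : q ^ (i + 1) ≠ 1 := fun h => by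
  have := pow_lt_one₀ (norm_nonneg q) hq i.succ_ne_zero
  rw [← norm_pow, h, norm_one] at this
  exact this.false

theorem tendsto_qBinomial_atTop (hq : ‖q‖ < 1) (j : ℕ) :
    Tendsto (fun n => qBinomial q n j) atTop (𝓝 (qPochhammer q j)⁻¹) := by
  have hprod : Tendsto (fun n => ∏ i ∈ range j, (1 - q ^ (n - i))) atTop (𝓝 1) := by
    rw [← prod_const_one (s := range j)]
    refine tendsto_finsetProd _ fun i _ => ?_
    simpa using tendsto_const_nhds.sub
      ((tendsto_pow_atTop_nhds_zero_of_norm_lt_one hq).comp (tendsto_sub_atTop_nat i))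
  refine (one_div (qPochhammer q j) ▸ hprod.div_const (qPochhammer q j)).congr fun n => ?_
  rw [← qBinomial_mul_qPochhammer,
    mul_div_cancel_right₀ _ (qPochhammer_ne_zero (pow_succ_ne_one_of_norm_lt_one hq) j)]

theorem tendsto_eulerCoeff_atTop (hq : ‖q‖ < 1) (j : ℕ) :
    Tendsto (fun n => eulerCoeff q n j) atTop
      (𝓝 ((-1) ^ j * q ^ (j * (j + 1) / 2) * (qPochhammer q j)⁻¹)) :=
  (tendsto_qBinomial_atTop hq j).const_mul _

end NormedField

section Real

open Real

theorem Real.exp_neg_div_one_sub_le {x : ℝ} (hx : x < 1) : exp (-(x / (1 - x))) ≤ 1 - x := by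
  have hpos : 0 < 1 - x := sub_pos.2 hx
  rw [← le_log_iff_exp_le hpos]
  convert one_sub_inv_le_log_of_pos hpos using 1
  field_simp
  ring

variable {q : ℝ}

theorem qPochhammer_pos (hq0 : 0 ≤ q) (hq1 : q < 1) (k : ℕ) : 0 < qPochhammer q k :=
  prod_pos fun i _ => sub_pos.2 (pow_lt_one₀ hq0 hq1 i.succ_ne_zero)

theorem qBinomial_nonneg (hq0 : 0 ≤ q) (n j : ℕ) : 0 ≤ qBinomial q n j := by
  induction n generalizing j with
  | zero => cases j <;> simp [qBinomial]
  | succ n ih =>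
    cases j with
    | zero => simp
    | succ j =>
      have := ih j
      have := ih (j + 1)
      rw [qBinomial_succ_succ]
      positivity

theorem qBinomial_le_inv_qPochhammer (hq0 : 0 ≤ q) (hq1 : q < 1) (n j : ℕ) :
    qBinomial q n j ≤ (qPochhammer q j)⁻¹ := by
  rw [← one_div, le_div_iff₀ (qPochhammer_pos hq0 hq1 j), qBinomial_mul_qPochhammer]
  exact prod_le_one (fun i _ => sub_nonneg.2 (pow_le_one₀ hq0 hq1.le))
    fun i _ => sub_le_self _ (pow_nonneg hq0 _)

theorem exp_neg_sum_le_qPochhammer (hq0 : 0 ≤ q) (hq1 : q < 1) (k : ℕ) :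
    exp (-∑ i ∈ range k, q ^ (i + 1) / (1 - q ^ (i + 1))) ≤ qPochhammer q k := by
  rw [← sum_neg_distrib, exp_sum]
  exact prod_le_prod (fun i _ => (exp_pos _).le)
    fun i _ => exp_neg_div_one_sub_le (pow_lt_one₀ hq0 hq1 i.succ_ne_zero)

theorem summable_pow_div_one_sub_pow (hq0 : 0 ≤ q) (hq1 : q < 1) :
    Summable fun k : ℕ => q ^ (k + 1) / (1 - q ^ (k + 1)) := by
  refine .of_nonneg_of_le (fun k => div_nonneg (pow_nonneg hq0 _)
      (sub_nonneg.2 (pow_le_one₀ hq0 hq1.le))) (fun k => ?_)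
    ((summable_geometric_of_lt_one hq0 hq1).mul_left (q / (1 - q)))
  rw [div_mul_eq_mul_div, ← pow_succ']
  exact div_le_div_of_nonneg_left (pow_nonneg hq0 _) (sub_pos.2 hq1)
    (sub_le_sub_left (pow_le_of_le_one hq0 hq1.le k.succ_ne_zero) 1)

theorem abs_eulerCoeff_div_le (hq0 : 0 ≤ q) (hq1 : q < 1) (n k : ℕ) :
    |eulerCoeff q n (k + 1) / (1 - q ^ (k + 1))| ≤
      exp (∑' i : ℕ, q ^ (i + 1) / (1 - q ^ (i + 1))) * (q ^ (k + 1) / (1 - q ^ (k + 1))) := by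
  set s := ∑' i : ℕ, q ^ (i + 1) / (1 - q ^ (i + 1))
  have hbinom : qBinomial q n (k + 1) ≤ exp s := by
    refine (qBinomial_le_inv_qPochhammer hq0 hq1 n (k + 1)).trans ?_
    rw [← inv_inv (exp s), ← exp_neg]
    refine inv_anti₀ (exp_pos _) ((exp_le_exp.2 (neg_le_neg ?_)).trans
      (exp_neg_sum_le_qPochhammer hq0 hq1 (k + 1)))
    exact (summable_pow_div_one_sub_pow hq0 hq1).sum_le_tsum _ fun i _ =>
      div_nonneg (pow_nonneg hq0 _) (sub_nonneg.2 (pow_le_one₀ hq0 hq1.le))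
  have hpow : q ^ ((k + 1) * (k + 1 + 1) / 2) ≤ q ^ (k + 1) :=
    pow_le_pow_of_le_one hq0 hq1.le (Nat.triangle_add_succ k ▸ Nat.le_add_left _ _)
  have hden : 0 < 1 - q ^ (k + 1) := sub_pos.2 (pow_lt_one₀ hq0 hq1 k.succ_ne_zero)
  rw [eulerCoeff, abs_div, abs_of_pos hden, abs_mul, abs_mul, abs_pow, abs_neg, abs_one, one_pow,
    one_mul, abs_of_nonneg (pow_nonneg hq0 _), abs_of_nonneg (qBinomial_nonneg hq0 _ _),
    mul_div_assoc', mul_comm (exp s)]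
  exact div_le_div_of_nonneg_right
    (mul_le_mul hpow hbinom (qBinomial_nonneg hq0 _ _) (pow_nonneg hq0 _)) hden.le

end Real

theorem qzeta_one_alternating_series (q : ℝ) (hq0 : 0 < q) (hq1 : q < 1) :
    ∑' k : ℕ, q ^ (k + 1) / (1 - q ^ (k + 1)) =
      ∑' k : ℕ, (-1 : ℝ) ^ k * q ^ ((k + 1) * (k + 2) / 2) /
        ((1 - q ^ (k + 1)) * ∏ j ∈ Finset.range (k + 1), (1 - q ^ (j + 1))) := by
  have hq : ‖q‖ < 1 := by rwa [Real.norm_of_nonneg hq0.le]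
  have hsum := summable_pow_div_one_sub_pow hq0.le hq1
  set f : ℕ → ℕ → ℝ := fun n k => -(eulerCoeff q n (k + 1) / (1 - q ^ (k + 1)))
  have hpartial (n : ℕ) : ∑ k ∈ range n, q ^ (k + 1) / (1 - q ^ (k + 1)) = ∑' k, f n k := by
    rw [sum_range_pow_div_one_sub_pow (pow_succ_ne_one_of_norm_lt_one hq), ← sum_neg_distrib,
      tsum_eq_sum fun k hk => ?_]
    simp only [f, eulerCoeff_eq_zero_of_lt q (Nat.lt_succ_of_le (by simpa using hk)), zero_div,
      neg_zero]
  have hlim := hsum.hasSum.tendsto_sum_nat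
  simp only [hpartial] at hlim
  have hlim' := tendsto_tsum_of_dominated_convergence (hsum.mul_left _)
    (fun k => ((tendsto_eulerCoeff_atTop hq (k + 1)).div_const (1 - q ^ (k + 1))).neg)
    (.of_forall fun n k => by
      rw [norm_neg, Real.norm_eq_abs]; exact abs_eulerCoeff_div_le hq0.le hq1 n k)
  rw [tendsto_nhds_unique hlim hlim']
  refine tsum_congr fun k => ?_
  rw [qPochhammer, pow_succ (-1 : ℝ)]
  field_simp
end
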